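/- arXiv:2402.01479 — 4 statements merged into one kernel-verified Lean document; each statement's English description precedes it below -/
import Mathlib

section
/- Let (E,𝓑,μ) be a measure space with μ finite, let ψ : ℝ → [0,∞) be convex and lower semicontinuous with ψ(0)=0 satisfying lim_{|r|→∞} ψ(r)/|r| = +∞, and let ξ ≥ 0. If (vₙ)ₙ is a sequence of measurable functions with ∫_E ψ(vₙ) dμ ≤ ξ for all n, then there exist a strictly increasing subsequence (n_k) and a function v ∈ L¹(μ) such that v_{n_k} converges to v weakly in L¹(μ), i.e. for every bounded measurable u : E → ℝ one has ∫_E v_{n_k}·u dμ → ∫_E v·u dμ as k → ∞. -/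
/-!
Truncating at a level `c_j`, chosen by superlinearity so that `(j + 1) |r| ≤ ψ r` for
`|r| ≥ c_j`, moves every `vₙ` by at most `ξ / (j + 1)` in `L¹`, uniformly in `n`. At a fixed level
the truncations are bounded in `L²`, so one diagonal subsequence converges weakly in `L²` at every
level. Weak limits do not increase `L¹` distances, hence the limits `g_j` form a Cauchy sequence
in `L¹`, and its limit `v` is the weak `L¹` limit of the subsequence: against a bounded test
function the uniform approximation becomes uniform convergence, and the limits can be exchanged.
-/

open MeasureTheory Filter Topology
open scoped RealInnerProductSpace ENNReal

theorem exists_subseq_tendsto_of_abs_le {ι : Type*} [Countable ι] (a : ℕ → ι → ℝ) (B : ι → ℝ)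
    (ha : ∀ n i, |a n i| ≤ B i) :
    ∃ φ : ℕ → ℕ, StrictMono φ ∧ ∃ L : ι → ℝ, ∀ i, Tendsto (fun k => a (φ k) i) atTop (𝓝 (L i)) := by
  have hmem : ∀ n, a n ∈ Set.univ.pi fun i => Set.Icc (-B i) (B i) :=
    fun n i _ => abs_le.mp (ha n i)
  obtain ⟨L, -, φ, hφ, hL⟩ := (isCompact_univ_pi fun i => isCompact_Icc).isSeqCompact hmem
  exact ⟨φ, hφ, L, tendsto_pi_nhds.mp hL⟩

def truncate (c r : ℝ) : ℝ := max (-c) (min c r)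

theorem continuous_truncate (c : ℝ) : Continuous (truncate c) :=
  continuous_const.max (continuous_const.min continuous_id)

theorem abs_truncate_le {c : ℝ} (hc : 0 ≤ c) (r : ℝ) : |truncate c r| ≤ c :=
  abs_le.mpr ⟨le_max_left _ _, max_le (by linarith) (min_le_left _ _)⟩

theorem truncate_eq_self {c r : ℝ} (h : |r| ≤ c) : truncate c r = r := by
  rw [truncate, min_eq_right (abs_le.mp h).2, max_eq_right (abs_le.mp h).1]

theorem abs_sub_truncate_le {c : ℝ} (hc : 0 ≤ c) (r : ℝ) : |r - truncate c r| ≤ |r| := by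
  grind [truncate, abs_le]

section InnerProductSpace

variable {H : Type*} [NormedAddCommGroup H] [InnerProductSpace ℝ H]

def convergentInnerSubmodule (y : ℕ → H) : Submodule ℝ H where
  carrier := {z | ∃ l, Tendsto (fun k => ⟪y k, z⟫) atTop (𝓝 l)}
  zero_mem' := ⟨0, by simp⟩
  add_mem' := by
    rintro z z' ⟨l, hl⟩ ⟨l', hl'⟩
    exact ⟨l + l', by simpa only [inner_add_right] using hl.add hl'⟩
  smul_mem' := by
    rintro c z ⟨l, hl⟩
    exact ⟨c * l, by simpa only [real_inner_smul_right] using hl.const_mul c⟩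

theorem isClosed_convergentInnerSubmodule {y : ℕ → H} {C : ℝ} (hy : ∀ k, ‖y k‖ ≤ C) :
    IsClosed (convergentInnerSubmodule y : Set H) := by
  refine isClosed_of_closure_subset fun z hz => cauchySeq_tendsto_of_complete ?_
  rw [Metric.cauchySeq_iff']
  intro ε hε
  have hC : 0 ≤ C := (norm_nonneg _).trans (hy 0)
  obtain ⟨z', ⟨l, hl⟩, hzz'⟩ := Metric.mem_closure_iff.mp hz (ε / (3 * (C + 1))) (by positivity)
  obtain ⟨N, hN⟩ := Metric.cauchySeq_iff'.mp hl.cauchySeq (ε / 3) (by positivity)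
  have hclose : ∀ k, dist ⟪y k, z⟫ ⟪y k, z'⟫ ≤ ε / 3 := fun k => calc
    dist ⟪y k, z⟫ ⟪y k, z'⟫ = |⟪y k, z - z'⟫| := by rw [inner_sub_right, Real.dist_eq]
    _ ≤ ‖y k‖ * ‖z - z'‖ := abs_real_inner_le_norm _ _
    _ ≤ (C + 1) * (ε / (3 * (C + 1))) := by
      rw [← dist_eq_norm]
      gcongr
      · linarith [hy k]
    _ = ε / 3 := by field_simp
  refine ⟨N, fun n hn => ?_⟩
  calc dist ⟪y n, z⟫ ⟪y N, z⟫
      ≤ dist ⟪y n, z⟫ ⟪y n, z'⟫ + dist ⟪y n, z'⟫ ⟪y N, z'⟫ + dist ⟪y N, z'⟫ ⟪y N, z⟫ :=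
        dist_triangle4 _ _ _ _
    _ < ε / 3 + ε / 3 + ε / 3 := by
      rw [dist_comm ⟪y N, z'⟫]
      linarith [hclose n, hclose N, hN n hn]
    _ = ε := by ring

theorem convergentInnerSubmodule_eq_top [CompleteSpace H] {y : ℕ → H} {C : ℝ}
    (hy : ∀ k, ‖y k‖ ≤ C) {K : Submodule ℝ H} (hyK : ∀ k, y k ∈ K)
    (hK : K ≤ convergentInnerSubmodule y) :
    convergentInnerSubmodule y = ⊤ := by
  have hclosure : K.topologicalClosure ≤ convergentInnerSubmodule y :=
    K.topologicalClosure_minimal hK (isClosed_convergentInnerSubmodule hy)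
  have horth : Kᗮ ≤ convergentInnerSubmodule y := fun z hz =>
    ⟨0, by simpa only [Submodule.inner_right_of_mem_orthogonal (hyK _) hz] using tendsto_const_nhds⟩
  rw [eq_top_iff, ← K.topologicalClosure.sup_orthogonal_of_hasOrthogonalProjection]
  exact sup_le hclosure ((Submodule.orthogonal_le K.le_topologicalClosure).trans horth)

theorem exists_tendsto_inner_of_forall_exists_tendsto [CompleteSpace H] {y : ℕ → H}
    (hy : ∀ z, ∃ l, Tendsto (fun k => ⟪y k, z⟫) atTop (𝓝 l)) :
    ∃ w, ∀ z, Tendsto (fun k => ⟪y k, z⟫) atTop (𝓝 ⟪w, z⟫) := by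
  choose f hf using hy
  let Λ : StrongDual ℝ H :=
    continuousLinearMapOfTendsto (fun k => innerSL ℝ (y k)) (tendsto_pi_nhds.mpr hf)
  refine ⟨(InnerProductSpace.toDual ℝ H).symm Λ, fun z => ?_⟩
  rw [InnerProductSpace.toDual_symm_apply]
  exact hf z

theorem exists_subseq_tendsto_inner [CompleteSpace H] (x : ℕ → ℕ → H) (C : ℕ → ℝ)
    (hC : ∀ m n, ‖x m n‖ ≤ C m) :
    ∃ φ : ℕ → ℕ, StrictMono φ ∧ ∃ w : ℕ → H,
      ∀ m z, Tendsto (fun k => ⟪x m (φ k), z⟫) atTop (𝓝 ⟪w m, z⟫) := by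
  obtain ⟨φ, hφ, L, hL⟩ := exists_subseq_tendsto_of_abs_le
    (fun n (i : ℕ × ℕ × ℕ) => ⟪x i.1 n, x i.2.1 i.2.2⟫) (fun i => C i.1 * C i.2.1)
    fun n i => (abs_real_inner_le_norm _ _).trans
      (mul_le_mul (hC _ _) (hC _ _) (norm_nonneg _) ((norm_nonneg _).trans (hC i.1 n)))
  have hconv (m : ℕ) : convergentInnerSubmodule (fun k => x m (φ k)) = ⊤ :=
    convergentInnerSubmodule_eq_top (fun k => hC m (φ k))
      (K := Submodule.span ℝ (Set.range (Function.uncurry x)))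
      (fun k => Submodule.subset_span ⟨(m, φ k), rfl⟩)
      (Submodule.span_le.mpr (by rintro _ ⟨⟨m', n'⟩, rfl⟩; exact ⟨L (m, m', n'), hL (m, m', n')⟩))
  choose w hw using fun m =>
    exists_tendsto_inner_of_forall_exists_tendsto fun z => (hconv m).ge Submodule.mem_top
  exact ⟨φ, hφ, w, hw⟩

end InnerProductSpace

def TendstoWeaklyL1 {E : Type*} [MeasurableSpace E] (μ : Measure E) (f : ℕ → E → ℝ)
    (g : E → ℝ) : Prop :=
  ∀ u : E → ℝ, Measurable u → (∃ M : ℝ, ∀ x, |u x| ≤ M) →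
    Tendsto (fun k => ∫ x, f k x * u x ∂μ) atTop (𝓝 (∫ x, g x * u x ∂μ))

section MeasureSpace

variable {E : Type*} [MeasurableSpace E] {μ : Measure E} {ψ : ℝ → ℝ}

theorem integral_mul_eq_inner_toLp {f u : E → ℝ} (hf : MemLp f 2 μ) (hu : MemLp u 2 μ) :
    ∫ x, f x * u x ∂μ = ⟪hf.toLp f, hu.toLp u⟫ := by
  rw [L2.inner_def]
  refine integral_congr_ae ?_
  filter_upwards [hf.coeFn_toLp, hu.coeFn_toLp] with x hfx hux
  simp [hfx, hux, mul_comm]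

theorem exists_subseq_tendsto_integral_mul (f : ℕ → ℕ → E → ℝ) (hf : ∀ m n, MemLp (f m n) 2 μ)
    (C : ℕ → ℝ) (hC : ∀ m n, (eLpNorm (f m n) 2 μ).toReal ≤ C m) :
    ∃ φ : ℕ → ℕ, StrictMono φ ∧ ∃ g : ℕ → E → ℝ, ∀ m, MemLp (g m) 2 μ ∧
      ∀ u, MemLp u 2 μ → Tendsto (fun k => ∫ x, f m (φ k) x * u x ∂μ) atTop
        (𝓝 (∫ x, g m x * u x ∂μ)) := by
  obtain ⟨φ, hφ, w, hw⟩ := exists_subseq_tendsto_inner (fun m n => (hf m n).toLp) C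
    fun m n => (Lp.norm_toLp _ _).trans_le (hC m n)
  refine ⟨φ, hφ, fun m => w m, fun m => ⟨Lp.memLp _, fun u hu => ?_⟩⟩
  simp only [integral_mul_eq_inner_toLp (hf _ _) hu, integral_mul_eq_inner_toLp (Lp.memLp _) hu,
    Lp.toLp_coeFn]
  exact hw m _

theorem exists_subseq_tendstoWeaklyL1_of_abs_le [IsFiniteMeasure μ] (f : ℕ → ℕ → E → ℝ)
    (hf : ∀ m n, AEStronglyMeasurable (f m n) μ) (C : ℕ → ℝ) (hC : ∀ m n x, |f m n x| ≤ C m) :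
    ∃ φ : ℕ → ℕ, StrictMono φ ∧ ∃ g : ℕ → E → ℝ,
      ∀ m, Integrable (g m) μ ∧ TendstoWeaklyL1 μ (fun k => f m (φ k)) (g m) := by
  have hf2 (m n : ℕ) : MemLp (f m n) 2 μ := MemLp.of_bound (hf m n) (C m) (ae_of_all _ (hC m n))
  obtain ⟨φ, hφ, g, hg⟩ := exists_subseq_tendsto_integral_mul f hf2 _ fun m n =>
    (Lp.norm_toLp _ (hf2 m n)).symm.trans_le <|
      Lp.norm_le_of_ae_bound (le_max_right (C m) 0) <|
        (hf2 m n).coeFn_toLp.mono fun x hx => by rw [hx]; exact (hC m n x).trans (le_max_left _ _)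
  refine ⟨φ, hφ, g, fun m => ⟨(hg m).1.integrable one_le_two, fun u hu ⟨M, hM⟩ => ?_⟩⟩
  exact (hg m).2 u (MemLp.of_bound hu.aestronglyMeasurable M (ae_of_all _ hM))

theorem abs_integral_mul_sub_integral_mul_le {f g u : E → ℝ} (hf : Integrable f μ)
    (hg : Integrable g μ) (hu : AEStronglyMeasurable u μ) {M : ℝ} (hM : ∀ x, |u x| ≤ M) :
    |∫ x, f x * u x ∂μ - ∫ x, g x * u x ∂μ| ≤ M * ∫ x, |f x - g x| ∂μ := by
  have hMu : ∀ᵐ x ∂μ, ‖u x‖ ≤ M := ae_of_all _ hM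
  rw [← integral_sub (hf.mul_bdd hu hMu) (hg.mul_bdd hu hMu), ← integral_const_mul (μ := μ) M]
  refine (Real.norm_eq_abs _).ge.trans <|
    norm_integral_le_of_norm_le ((hf.sub hg).abs.const_mul M) (ae_of_all _ fun x => ?_)
  rw [← sub_mul, Real.norm_eq_abs, abs_mul, mul_comm]
  exact mul_le_mul_of_nonneg_right (hM x) (abs_nonneg _)

theorem integral_abs_le_of_forall_integral_mul_le {g : E → ℝ} (hg : AEStronglyMeasurable g μ)
    {c : ℝ} (h : ∀ u : E → ℝ, Measurable u → (∀ x, |u x| ≤ 1) → ∫ x, g x * u x ∂μ ≤ c) :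
    ∫ x, |g x| ∂μ ≤ c := by
  set s : E → ℝ := fun x => if 0 ≤ hg.mk g x then 1 else -1
  have hs : Measurable s := Measurable.ite
    (measurableSet_le measurable_const hg.stronglyMeasurable_mk.measurable)
    measurable_const measurable_const
  have hgs : ∫ x, |g x| ∂μ = ∫ x, g x * s x ∂μ := by
    refine integral_congr_ae ?_
    filter_upwards [hg.ae_eq_mk] with x hx
    rcases le_or_gt 0 (g x) with hgx | hgx
    · simp [s, ← hx, hgx, abs_of_nonneg]
    · simp [s, ← hx, hgx.not_ge, abs_of_neg hgx]
  rw [hgs]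
  exact h s hs fun x => by by_cases hx : 0 ≤ hg.mk g x <;> simp [s, hx]

theorem integral_abs_sub_le_of_tendstoWeaklyL1 {F₁ F₂ : ℕ → E → ℝ} {G₁ G₂ : E → ℝ}
    (hF₁ : ∀ k, Integrable (F₁ k) μ) (hF₂ : ∀ k, Integrable (F₂ k) μ) (hG₁ : Integrable G₁ μ)
    (hG₂ : Integrable G₂ μ) (h₁ : TendstoWeaklyL1 μ F₁ G₁) (h₂ : TendstoWeaklyL1 μ F₂ G₂)
    {c : ℝ} (hc : ∀ k, ∫ x, |F₁ k x - F₂ k x| ∂μ ≤ c) :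
    ∫ x, |G₁ x - G₂ x| ∂μ ≤ c := by
  refine integral_abs_le_of_forall_integral_mul_le (g := fun x => G₁ x - G₂ x)
    (hG₁.sub hG₂).aestronglyMeasurable fun u hu hu1 => ?_
  have hlim := (h₁ u hu ⟨1, hu1⟩).sub (h₂ u hu ⟨1, hu1⟩)
  have hG : ∫ x, (G₁ x - G₂ x) * u x ∂μ = ∫ x, G₁ x * u x ∂μ - ∫ x, G₂ x * u x ∂μ := by
    simp only [sub_mul]
    exact integral_sub (hG₁.mul_bdd hu.aestronglyMeasurable (ae_of_all _ hu1))
      (hG₂.mul_bdd hu.aestronglyMeasurable (ae_of_all _ hu1))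
  rw [hG]
  refine le_of_tendsto' hlim fun k => (le_abs_self _).trans ?_
  calc _ ≤ 1 * ∫ x, |F₁ k x - F₂ k x| ∂μ :=
        abs_integral_mul_sub_integral_mul_le (hF₁ k) (hF₂ k) hu.aestronglyMeasurable hu1
    _ ≤ c := by rw [one_mul]; exact hc k

theorem exists_integrable_tendsto_integral_abs_sub {g : ℕ → E → ℝ} (hg : ∀ j, Integrable (g j) μ)
    {δ : ℕ → ℝ} (hδ : Tendsto δ atTop (𝓝 0))
    (hgδ : ∀ i j, ∫ x, |g i x - g j x| ∂μ ≤ δ i + δ j) :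
    ∃ v, Integrable v μ ∧ Tendsto (fun j => ∫ x, |g j x - v x| ∂μ) atTop (𝓝 0) := by
  set W : ℕ → Lp ℝ 1 μ := fun j => (hg j).toL1 (g j)
  have hdist (j : ℕ) (V : Lp ℝ 1 μ) : dist (W j) V = ∫ x, |g j x - V x| ∂μ := by
    rw [L1.dist_eq_integral_dist]
    refine integral_congr_ae ?_
    filter_upwards [(hg j).coeFn_toL1] with x hx
    rw [hx, Real.dist_eq]
  have hW : CauchySeq W := by
    rw [Metric.cauchySeq_iff]
    intro ε hε
    obtain ⟨N, hN⟩ := eventually_atTop.mp (hδ.eventually (gt_mem_nhds (half_pos hε)))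
    refine ⟨N, fun i hi j hj => ?_⟩
    have hWij : dist (W i) (W j) = ∫ x, |g i x - g j x| ∂μ := by
      rw [hdist]
      refine integral_congr_ae ?_
      filter_upwards [(hg j).coeFn_toL1] with x hx
      rw [hx]
    linarith [hgδ i j, hN i hi, hN j hj]
  obtain ⟨V, hV⟩ := cauchySeq_tendsto_of_complete hW
  refine ⟨V, L1.integrable_coeFn V, ?_⟩
  simpa only [hdist] using tendsto_iff_dist_tendsto_zero.mp hV

theorem tendstoWeaklyL1_of_uniform_approx {f : ℕ → E → ℝ} {T : ℕ → ℕ → E → ℝ}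
    {g : ℕ → E → ℝ} {v : E → ℝ} {δ : ℕ → ℝ} (hf : ∀ k, Integrable (f k) μ)
    (hT : ∀ j k, Integrable (T j k) μ) (hg : ∀ j, Integrable (g j) μ) (hv : Integrable v μ)
    (hTg : ∀ j, TendstoWeaklyL1 μ (T j) (g j)) (hfT : ∀ j k, ∫ x, |f k x - T j k x| ∂μ ≤ δ j)
    (hδ : Tendsto δ atTop (𝓝 0)) (hgv : Tendsto (fun j => ∫ x, |g j x - v x| ∂μ) atTop (𝓝 0)) :
    TendstoWeaklyL1 μ f v := by
  intro u hu ⟨M₀, hM₀⟩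
  obtain ⟨M, hM0, hM⟩ : ∃ M, 0 ≤ M ∧ ∀ x, |u x| ≤ M :=
    ⟨max M₀ 0, le_max_right _ _, fun x => (hM₀ x).trans (le_max_left _ _)⟩
  have hu' : AEStronglyMeasurable u μ := hu.aestronglyMeasurable
  have hMδ : Tendsto (fun j => M * δ j) atTop (𝓝 0) := by simpa using hδ.const_mul M
  have hfT_unif : TendstoUniformly (fun j k => ∫ x, T j k x * u x ∂μ)
      (fun k => ∫ x, f k x * u x ∂μ) atTop := by
    rw [Metric.tendstoUniformly_iff]
    intro ε hε
    filter_upwards [hMδ.eventually (gt_mem_nhds hε)] with j hj k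
    rw [Real.dist_eq]
    exact ((abs_integral_mul_sub_integral_mul_le (hf k) (hT j k) hu' hM).trans
      (mul_le_mul_of_nonneg_left (hfT j k) hM0)).trans_lt hj
  have hgv_lim : Tendsto (fun j => ∫ x, g j x * u x ∂μ) atTop (𝓝 (∫ x, v x * u x ∂μ)) := by
    rw [tendsto_iff_dist_tendsto_zero]
    refine squeeze_zero (fun j => dist_nonneg) (fun j => (Real.dist_eq _ _).trans_le
      (abs_integral_mul_sub_integral_mul_le (hg j) hv hu' hM)) ?_
    simpa using hgv.const_mul M
  exact hfT_unif.tendsto_of_eventually_tendsto (Eventually.of_forall fun j => hTg j u hu ⟨M, hM⟩)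
    hgv_lim

theorem exists_tendstoWeaklyL1_of_uniform_approx {f : ℕ → E → ℝ} {T : ℕ → ℕ → E → ℝ}
    {g : ℕ → E → ℝ} {δ : ℕ → ℝ} (hf : ∀ k, Integrable (f k) μ)
    (hT : ∀ j k, Integrable (T j k) μ) (hg : ∀ j, Integrable (g j) μ)
    (hTg : ∀ j, TendstoWeaklyL1 μ (T j) (g j)) (hfT : ∀ j k, ∫ x, |f k x - T j k x| ∂μ ≤ δ j)
    (hδ : Tendsto δ atTop (𝓝 0)) :
    ∃ v, Integrable v μ ∧ TendstoWeaklyL1 μ f v := by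
  have hTT (i j k : ℕ) : ∫ x, |T i k x - T j k x| ∂μ ≤ δ i + δ j := calc
    ∫ x, |T i k x - T j k x| ∂μ ≤ ∫ x, (|f k x - T i k x| + |f k x - T j k x|) ∂μ :=
        integral_mono ((hT i k).sub (hT j k)).abs
          (((hf k).sub (hT i k)).abs.add ((hf k).sub (hT j k)).abs) fun x =>
          (abs_sub_le _ (f k x) _).trans_eq (by rw [abs_sub_comm (T i k x)])
    _ = ∫ x, |f k x - T i k x| ∂μ + ∫ x, |f k x - T j k x| ∂μ :=
        integral_add ((hf k).sub (hT i k)).abs ((hf k).sub (hT j k)).abs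
    _ ≤ δ i + δ j := add_le_add (hfT i k) (hfT j k)
  obtain ⟨v, hv, hgv⟩ := exists_integrable_tendsto_integral_abs_sub hg hδ fun i j =>
    integral_abs_sub_le_of_tendstoWeaklyL1 (hT i) (hT j) (hg i) (hg j) (hTg i) (hTg j) (hTT i j)
  exact ⟨v, hv, tendstoWeaklyL1_of_uniform_approx hf hT hg hv hTg hfT hδ hgv⟩


theorem ofReal_mul_abs_sub_truncate_le {M c : ℝ} (hM : 0 ≤ M) (hc : 0 ≤ c)
    (hψ : ∀ r, c ≤ |r| → M * |r| ≤ ψ r) (r : ℝ) :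
    ENNReal.ofReal (M * |r - truncate c r|) ≤ ENNReal.ofReal (ψ r) := by
  rcases le_total |r| c with h | h
  · simp [truncate_eq_self h]
  · exact ENNReal.ofReal_le_ofReal
      ((mul_le_mul_of_nonneg_left (abs_sub_truncate_le hc r) hM).trans (hψ r h))

theorem integral_abs_sub_truncate_le {v : E → ℝ} (hv : AEStronglyMeasurable v μ) {M c ξ : ℝ}
    (hM : 0 < M) (hc : 0 ≤ c) (hξ : 0 ≤ ξ) (hψ : ∀ r, c ≤ |r| → M * |r| ≤ ψ r)
    (hvψ : ∫⁻ x, ENNReal.ofReal (ψ (v x)) ∂μ ≤ ENNReal.ofReal ξ) :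
    ∫ x, |v x - truncate c (v x)| ∂μ ≤ ξ / M := by
  have hmeas : AEStronglyMeasurable (fun x => M * |v x - truncate c (v x)|) μ :=
    ((hv.sub ((continuous_truncate c).comp_aestronglyMeasurable hv)).norm).const_mul M
  rw [le_div_iff₀' hM, ← integral_const_mul,
    integral_eq_lintegral_of_nonneg_ae (ae_of_all _ fun x => by positivity) hmeas]
  calc _ ≤ (ENNReal.ofReal ξ).toReal := ENNReal.toReal_mono ENNReal.ofReal_ne_top
        ((lintegral_mono fun x => ofReal_mul_abs_sub_truncate_le hM.le hc hψ (v x)).trans hvψ)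
    _ = ξ := ENNReal.toReal_ofReal hξ

theorem integrable_of_lintegral_ofReal_comp_ne_top [IsFiniteMeasure μ] {v : E → ℝ}
    (hv : AEStronglyMeasurable v μ) {R : ℝ} (hψ : ∀ r, R ≤ |r| → |r| ≤ ψ r)
    (hvψ : ∫⁻ x, ENNReal.ofReal (ψ (v x)) ∂μ ≠ ∞) : Integrable v μ := by
  refine ⟨hv, (hasFiniteIntegral_iff_norm v).mpr ?_⟩
  have hpt (x : E) : ENNReal.ofReal ‖v x‖ ≤ ENNReal.ofReal R + ENNReal.ofReal (ψ (v x)) := by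
    rw [Real.norm_eq_abs]
    rcases le_total |v x| R with h | h
    · exact (ENNReal.ofReal_le_ofReal h).trans le_self_add
    · exact (ENNReal.ofReal_le_ofReal (hψ _ h)).trans le_add_self
  calc _ ≤ ∫⁻ x, (ENNReal.ofReal R + ENNReal.ofReal (ψ (v x))) ∂μ := lintegral_mono hpt
    _ = ENNReal.ofReal R * μ Set.univ + ∫⁻ x, ENNReal.ofReal (ψ (v x)) ∂μ := by
      rw [lintegral_add_left measurable_const, lintegral_const]
    _ < ∞ := ENNReal.add_lt_top.mpr ⟨ENNReal.mul_lt_top ENNReal.ofReal_lt_top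
      (measure_lt_top μ _), hvψ.lt_top⟩

end MeasureSpace

theorem stmt_4_general {E : Type*} [MeasurableSpace E] (μ : Measure E) [IsFiniteMeasure μ]
    (ψ : ℝ → ℝ)
    (hsuper : ∀ M : ℝ, 0 < M → ∃ R : ℝ, 0 < R ∧ ∀ r : ℝ, R ≤ |r| → M * |r| ≤ ψ r)
    (ξ : ℝ) (hξ : 0 ≤ ξ)
    (vs : ℕ → E → ℝ) (hmeas : ∀ n, Measurable (vs n))
    (hbound : ∀ n, ∫⁻ x, ENNReal.ofReal (ψ (vs n x)) ∂μ ≤ ENNReal.ofReal ξ) :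
    ∃ φ : ℕ → ℕ, StrictMono φ ∧ ∃ v : E → ℝ, Integrable v μ ∧
      ∀ u : E → ℝ, Measurable u → (∃ M : ℝ, ∀ x, |u x| ≤ M) →
        Tendsto (fun k => ∫ x, vs (φ k) x * u x ∂μ) atTop
          (nhds (∫ x, v x * u x ∂μ)) := by
  choose c hc_pos hc using fun j : ℕ => hsuper ((j + 1 : ℕ) : ℝ) (by positivity)
  obtain ⟨R, -, hR⟩ := hsuper 1 one_pos
  have hvs (n : ℕ) : Integrable (vs n) μ :=
    integrable_of_lintegral_ofReal_comp_ne_top (hmeas n).aestronglyMeasurable (by simpa using hR)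
      (ne_top_of_le_ne_top ENNReal.ofReal_ne_top (hbound n))
  set T : ℕ → ℕ → E → ℝ := fun j n x => truncate (c j) (vs n x)
  have hT_meas (j n : ℕ) : AEStronglyMeasurable (T j n) μ :=
    ((continuous_truncate _).measurable.comp (hmeas n)).aestronglyMeasurable
  have hT_le (j n : ℕ) (x : E) : |T j n x| ≤ c j := abs_truncate_le (hc_pos j).le _
  obtain ⟨φ, hφ, g, hg⟩ := exists_subseq_tendstoWeaklyL1_of_abs_le T hT_meas c hT_le
  obtain ⟨v, hv, hweak⟩ := exists_tendstoWeaklyL1_of_uniform_approx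
    (f := fun k => vs (φ k)) (T := fun j k => T j (φ k)) (δ := fun j => ξ / ((j + 1 : ℕ) : ℝ))
    (fun k => hvs _) (fun j k => Integrable.of_bound (hT_meas j _) _ (ae_of_all _ (hT_le j _)))
    (fun j => (hg j).1) (fun j => (hg j).2)
    (fun j k => integral_abs_sub_truncate_le (hmeas _).aestronglyMeasurable (by positivity)
      (hc_pos j).le hξ (hc j) (hbound _))
    ((tendsto_const_div_atTop_nhds_zero_nat ξ).comp (tendsto_add_atTop_nat 1))
  exact ⟨φ, hφ, v, hv, hweak⟩

/-- (Dunford–Pettis type compactness) A sequence with uniformly bounded energy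
`∫ ψ(vₙ) dμ ≤ ξ` has a subsequence converging weakly in `L¹(μ)`. -/
theorem stmt_4 {E : Type*} [MeasurableSpace E] (μ : Measure E) [IsFiniteMeasure μ]
    (ψ : ℝ → ℝ) (hconv : ConvexOn ℝ Set.univ ψ) (hlsc : LowerSemicontinuous ψ)
    (hnonneg : ∀ r : ℝ, 0 ≤ ψ r) (hzero : ψ 0 = 0)
    (hsuper : ∀ M : ℝ, 0 < M → ∃ R : ℝ, 0 < R ∧ ∀ r : ℝ, R ≤ |r| → M * |r| ≤ ψ r)
    (ξ : ℝ) (hξ : 0 ≤ ξ)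
    (vs : ℕ → E → ℝ) (hmeas : ∀ n, Measurable (vs n))
    (hbound : ∀ n, ∫⁻ x, ENNReal.ofReal (ψ (vs n x)) ∂μ ≤ ENNReal.ofReal ξ) :
    ∃ φ : ℕ → ℕ, StrictMono φ ∧ ∃ v : E → ℝ, Integrable v μ ∧
      ∀ u : E → ℝ, Measurable u → (∃ M : ℝ, ∀ x, |u x| ≤ M) →
        Tendsto (fun k => ∫ x, vs (φ k) x * u x ∂μ) atTop
          (nhds (∫ x, v x * u x ∂μ)) :=
  stmt_4_general μ ψ hsuper ξ hξ vs hmeas hbound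
end

section
/- Let (E,𝓑,μ) be a measure space with μ finite and let ψ : ℝ → [0,∞) be convex and lower semicontinuous with ψ(0)=0. If (vₙ)ₙ ⊆ L¹(μ) converges to v ∈ L¹(μ) weakly in L¹(μ) (i.e. ∫_E vₙ·u dμ → ∫_E v·u dμ for every bounded measurable u : E → ℝ), then ∫_E ψ(v) dμ ≤ liminf_{n→∞} ∫_E ψ(vₙ) dμ. -/
/-!
A convex `ψ : ℝ → ℝ` lies above each supporting line `r ↦ ψ t + ψ'₊(t) (r - t)`, and its right
derivative `ψ'₊` is monotone, hence measurable and bounded on `[-K, K]`. Taking `t = v(x)` where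
`|v(x)| ≤ K` and the zero line elsewhere (allowed since `ψ ≥ 0`) gives bounded measurable `σ, κ`
on `E` with `r σ(x) + κ(x) ≤ ψ(r)` for all `r` and `v σ + κ = 1_{|v| ≤ K} ψ(v)`. Testing the weak
convergence against `σ` yields `∫ 1_{|v| ≤ K} ψ(v) = lim ∫ (vₙ σ + κ) ≤ liminf ∫ ψ(vₙ)`, and
monotone convergence in `K` concludes.
-/

open MeasureTheory Filter Set Topology
open scoped ENNReal

namespace ConvexOn

variable {ψ : ℝ → ℝ}

theorem monotone_rightDeriv (hψ : ConvexOn ℝ univ ψ) :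
    Monotone fun t => derivWithin ψ (Ioi t) t :=
  monotoneOn_univ.mp (by simpa only [interior_univ] using hψ.monotoneOn_rightDeriv)

theorem add_rightDeriv_mul_sub_le (hψ : ConvexOn ℝ univ ψ) (t r : ℝ) :
    ψ t + derivWithin ψ (Ioi t) t * (r - t) ≤ ψ r := by
  have ht : t ∈ interior univ := by simp
  rcases lt_trichotomy t r with htr | rfl | hrt
  · have h := hψ.rightDeriv_le_slope_of_mem_interior ht (mem_univ r) htr
    rw [slope_def_field, le_div_iff₀ (sub_pos.mpr htr)] at h
    linarith
  · simp
  · have h := (hψ.slope_le_leftDeriv_of_mem_interior (mem_univ r) ht hrt).trans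
      (hψ.leftDeriv_le_rightDeriv_of_mem_interior ht)
    rw [slope_def_field, div_le_iff₀ (sub_pos.mpr hrt)] at h
    linarith

protected theorem continuous (hψ : ConvexOn ℝ univ ψ) : Continuous ψ :=
  continuousOn_univ.mp (hψ.continuousOn isOpen_univ)

theorem exists_bounded_measurable_support_lines (hψ : ConvexOn ℝ univ ψ)
    (hψ0 : ∀ r, 0 ≤ ψ r) (K : ℝ) :
    ∃ σ κ : ℝ → ℝ, Measurable σ ∧ Measurable κ ∧ (∃ M, ∀ t, |σ t| ≤ M) ∧
      (∃ C, ∀ t, |κ t| ≤ C) ∧ (∀ t r, r * σ t + κ t ≤ ψ r) ∧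
      ∀ t, t * σ t + κ t = (Icc (-K) K).indicator ψ t := by
  set I := Icc (-K) K
  set s : ℝ → ℝ := fun t => derivWithin ψ (Ioi t) t
  have hsm : Measurable s := hψ.monotone_rightDeriv.measurable
  set M := max |s (-K)| |s K|
  have hM0 : 0 ≤ M := (abs_nonneg _).trans (le_max_left _ _)
  have hsM : ∀ t ∈ I, |s t| ≤ M := fun t ht =>
    abs_le_max_abs_abs (hψ.monotone_rightDeriv ht.1) (hψ.monotone_rightDeriv ht.2)
  obtain ⟨B, hB⟩ := (isCompact_Icc : IsCompact I).exists_bound_of_continuousOn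
    hψ.continuous.continuousOn
  refine ⟨I.indicator s, I.indicator fun t => ψ t - s t * t, hsm.indicator measurableSet_Icc,
    (hψ.continuous.measurable.sub (hsm.mul measurable_id)).indicator measurableSet_Icc,
    ⟨M, fun t => ?_⟩, ⟨|B| + M * |K|, fun t => ?_⟩, fun t r => ?_, fun t => ?_⟩ <;>
    by_cases ht : t ∈ I
  · simpa [ht] using hsM t ht
  · simpa [ht] using hM0
  · have htK : |t| ≤ |K| := (abs_le.mpr ht).trans (le_abs_self K)
    calc |I.indicator (fun t => ψ t - s t * t) t| ≤ |ψ t| + |s t| * |t| := by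
          rw [indicator_of_mem ht, ← abs_mul]; exact abs_sub _ _
      _ ≤ |B| + M * |K| :=
          add_le_add ((Real.norm_eq_abs _ ▸ hB t ht).trans (le_abs_self B))
            (mul_le_mul (hsM t ht) htK (abs_nonneg _) hM0)
  · simp only [indicator_of_notMem ht, abs_zero]; positivity
  · simp only [indicator_of_mem ht]; linarith [hψ.add_rightDeriv_mul_sub_le t r]
  · simpa [ht] using hψ0 r
  · simp only [indicator_of_mem ht]; ring
  · simp [ht]

end ConvexOn

theorem tendsto_indicator_Icc_natCast {β : Type*} [Zero β] [TopologicalSpace β] (f : ℝ → β)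
    (t : ℝ) : Tendsto (fun K : ℕ => (Icc (-(K : ℝ)) K).indicator f t) atTop (𝓝 (f t)) :=
  tendsto_const_nhds.congr' <| (tendsto_natCast_atTop_atTop.eventually_ge_atTop |t|).mono
    fun K hK => (indicator_of_mem (show t ∈ Icc (-(K : ℝ)) K from abs_le.mp hK) f).symm

section

variable {E : Type*} [MeasurableSpace E] {μ : Measure E}

theorem ofReal_integral_le_lintegral_ofReal {f : E → ℝ} (hf : Integrable f μ) :
    ENNReal.ofReal (∫ x, f x ∂μ) ≤ ∫⁻ x, ENNReal.ofReal (f x) ∂μ := by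
  calc ENNReal.ofReal (∫ x, f x ∂μ)
      ≤ ENNReal.ofReal (∫⁻ x, ENNReal.ofReal (f x) ∂μ).toReal := by
        rw [integral_eq_lintegral_pos_part_sub_lintegral_neg_part hf]
        exact ENNReal.ofReal_le_ofReal (sub_le_self _ ENNReal.toReal_nonneg)
    _ ≤ ∫⁻ x, ENNReal.ofReal (f x) ∂μ := ENNReal.ofReal_toReal_le

theorem ofReal_integral_le_liminf_lintegral {f g : ℕ → E → ℝ} {F : E → ℝ}
    (hf : ∀ n, Integrable (f n) μ)
    (hlim : Tendsto (fun n => ∫ x, f n x ∂μ) atTop (𝓝 (∫ x, F x ∂μ)))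
    (hfg : ∀ n x, f n x ≤ g n x) :
    ENNReal.ofReal (∫ x, F x ∂μ) ≤ liminf (fun n => ∫⁻ x, ENNReal.ofReal (g n x) ∂μ) atTop := by
  rw [← ((ENNReal.continuous_ofReal.tendsto _).comp hlim).liminf_eq]
  exact liminf_le_liminf <| Eventually.of_forall fun n =>
    (ofReal_integral_le_lintegral_ofReal (hf n)).trans
      (lintegral_mono fun x => ENNReal.ofReal_le_ofReal (hfg n x))

theorem lintegral_ofReal_indicator_Icc_le_liminf [IsFiniteMeasure μ] {ψ : ℝ → ℝ}
    (hψ : ConvexOn ℝ univ ψ) (hψ0 : ∀ r, 0 ≤ ψ r) {vs : ℕ → E → ℝ} {v : E → ℝ}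
    (hvs : ∀ n, Integrable (vs n) μ) (hv : Integrable v μ)
    (hweak : ∀ u : E → ℝ, Measurable u → (∃ M : ℝ, ∀ x, |u x| ≤ M) →
      Tendsto (fun n => ∫ x, vs n x * u x ∂μ) atTop (𝓝 (∫ x, v x * u x ∂μ)))
    (K : ℝ) :
    ∫⁻ x, ENNReal.ofReal ((Icc (-K) K).indicator ψ (v x)) ∂μ
      ≤ liminf (fun n => ∫⁻ x, ENNReal.ofReal (ψ (vs n x)) ∂μ) atTop := by
  obtain ⟨σ, κ, hσm, hκm, ⟨M, hM⟩, ⟨C, hC⟩, hmin, hline⟩ :=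
    hψ.exists_bounded_measurable_support_lines hψ0 K
  obtain ⟨w, hwm, hvw⟩ := hv.aemeasurable
  have hκ : Integrable (fun x => κ (w x)) μ :=
    .of_bound (hκm.comp hwm).aestronglyMeasurable C (ae_of_all _ fun x => hC _)
  have hmul {f : E → ℝ} (hf : Integrable f μ) : Integrable (fun x => f x * σ (w x)) μ :=
    hf.mul_bdd (hσm.comp hwm).aestronglyMeasurable (ae_of_all _ fun x => hM _)
  have hint {f : E → ℝ} (hf : Integrable f μ) :
      Integrable (fun x => f x * σ (w x) + κ (w x)) μ :=
    (hmul hf).add hκ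
  have hv_line : (fun x => v x * σ (w x) + κ (w x)) =ᵐ[μ]
      fun x => (Icc (-K) K).indicator ψ (v x) := by
    filter_upwards [hvw] with x hx
    rw [hx, hline]
  have hlim : Tendsto (fun n => ∫ x, vs n x * σ (w x) + κ (w x) ∂μ) atTop
      (𝓝 (∫ x, v x * σ (w x) + κ (w x) ∂μ)) := by
    rw [integral_add (hmul hv) hκ]
    exact ((hweak _ (hσm.comp hwm) ⟨M, fun x => hM _⟩).add_const _).congr
      fun n => (integral_add (hmul (hvs n)) hκ).symm
  calc ∫⁻ x, ENNReal.ofReal ((Icc (-K) K).indicator ψ (v x)) ∂μ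
      = ∫⁻ x, ENNReal.ofReal (v x * σ (w x) + κ (w x)) ∂μ :=
        lintegral_congr_ae (hv_line.mono fun _ hx => congrArg ENNReal.ofReal hx.symm)
    _ = ENNReal.ofReal (∫ x, v x * σ (w x) + κ (w x) ∂μ) := by
        refine (ofReal_integral_eq_lintegral_ofReal (hint hv) ?_).symm
        filter_upwards [hv_line] with x hx
        rw [Pi.zero_apply, hx]
        exact indicator_nonneg (fun r _ => hψ0 r) _
    _ ≤ liminf (fun n => ∫⁻ x, ENNReal.ofReal (ψ (vs n x)) ∂μ) atTop :=
        ofReal_integral_le_liminf_lintegral (fun n => hint (hvs n)) hlim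
          fun n x => hmin (w x) (vs n x)

end

theorem stmt_5_general {E : Type*} [MeasurableSpace E] (μ : Measure E) [IsFiniteMeasure μ]
    (ψ : ℝ → ℝ) (hconv : ConvexOn ℝ Set.univ ψ)
    (hnonneg : ∀ r : ℝ, 0 ≤ ψ r)
    (vs : ℕ → E → ℝ) (v : E → ℝ)
    (hvs : ∀ n, Integrable (vs n) μ) (hv : Integrable v μ)
    (hweak : ∀ u : E → ℝ, Measurable u → (∃ M : ℝ, ∀ x, |u x| ≤ M) →
      Tendsto (fun n => ∫ x, vs n x * u x ∂μ) atTop (nhds (∫ x, v x * u x ∂μ))) :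
    ∫⁻ x, ENNReal.ofReal (ψ (v x)) ∂μ
      ≤ liminf (fun n => ∫⁻ x, ENNReal.ofReal (ψ (vs n x)) ∂μ) atTop := by
  have hmono : ∀ x, Monotone fun K : ℕ =>
      ENNReal.ofReal ((Icc (-(K : ℝ)) K).indicator ψ (v x)) :=
    fun x _ _ hKL => ENNReal.ofReal_le_ofReal <| indicator_le_indicator_of_subset
      (Icc_subset_Icc (by simpa using hKL) (by simpa using hKL)) hnonneg _
  have htrunc := lintegral_tendsto_of_tendsto_of_monotone
    (fun K => (hconv.continuous.measurable.indicator measurableSet_Icc).ennreal_ofReal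
      |>.comp_aemeasurable hv.aemeasurable)
    (ae_of_all _ hmono)
    (ae_of_all _ fun x => (ENNReal.continuous_ofReal.tendsto _).comp
      (tendsto_indicator_Icc_natCast ψ (v x)))
  exact le_of_tendsto' htrunc fun K =>
    lintegral_ofReal_indicator_Icc_le_liminf hconv hnonneg hvs hv hweak K

/-- The energy functional `v ↦ ∫ ψ(v) dμ` is lower semicontinuous along sequences
converging weakly in `L¹(μ)`. -/
theorem stmt_5 {E : Type*} [MeasurableSpace E] (μ : Measure E) [IsFiniteMeasure μ]
    (ψ : ℝ → ℝ) (hconv : ConvexOn ℝ Set.univ ψ) (hlsc : LowerSemicontinuous ψ)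
    (hnonneg : ∀ r : ℝ, 0 ≤ ψ r) (hzero : ψ 0 = 0)
    (vs : ℕ → E → ℝ) (v : E → ℝ)
    (hvs : ∀ n, Integrable (vs n) μ) (hv : Integrable v μ)
    (hweak : ∀ u : E → ℝ, Measurable u → (∃ M : ℝ, ∀ x, |u x| ≤ M) →
      Tendsto (fun n => ∫ x, vs n x * u x ∂μ) atTop (nhds (∫ x, v x * u x ∂μ))) :
    ∫⁻ x, ENNReal.ofReal (ψ (v x)) ∂μ
      ≤ liminf (fun n => ∫⁻ x, ENNReal.ofReal (ψ (vs n x)) ∂μ) atTop :=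
  stmt_5_general μ ψ hconv hnonneg vs v hvs hv hweak
end

section
/- Let ψ : ℝ → [0,∞) be convex with ψ(0)=0, and suppose (H3) holds: there exists c > 0 such that for every r ∈ ℝ there is a subgradient η of ψ at r with |η| ≤ c·(|r| + 1). Define, for ε > 0, the Yosida approximation β^ε(r) := (r − J^ε(r))/ε where J^ε(r) is the unique minimizer of s ↦ (r−s)²/(2ε) + ψ(s). Then there exists a constant C > 0 (depending only on c, e.g. C = 2c²) such that for all r, r' ∈ ℝ and all ε₁, ε₂ > 0: (β^{ε₁}(r) − β^{ε₂}(r'))·(r − r') ≥ −C·(ε₁ + ε₂)·(r² + r'² + 1). -/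
/-!
Write `pᵢ = J^{εᵢ}(rᵢ)` and `βᵢ = β^{εᵢ}(rᵢ)`, so that `rᵢ = pᵢ + εᵢ βᵢ`. A first-order variation
of the minimisation problem at `pᵢ` shows `βᵢ ∈ ∂ψ(pᵢ)`. Monotonicity of `∂ψ` then gives
`(β₁ - β₂)(r₁ - r₂) ≥ ε₁ β₁² + ε₂ β₂² - (ε₁ + ε₂) β₁ β₂ ≥ -(ε₁ + ε₂) |β₁| |β₂|`, and monotonicity
between `pᵢ` and `rᵢ = pᵢ + εᵢ βᵢ` shows `|βᵢ|` is at most the size of any subgradient at `rᵢ`,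
hence `|βᵢ| ≤ c (|rᵢ| + 1)` by (H3); finally `(|r₁| + 1)(|r₂| + 1) ≤ 2 (r₁² + r₂² + 1)`.
-/

open Set Filter Topology

def HasSubgradientAt (ψ : ℝ → ℝ) (η x : ℝ) : Prop :=
  ∀ u, ψ x ≤ ψ u + η * (x - u)

namespace HasSubgradientAt

variable {ψ : ℝ → ℝ}

theorem mul_sub_nonneg {η η' x x' : ℝ} (h : HasSubgradientAt ψ η x)
    (h' : HasSubgradientAt ψ η' x') : 0 ≤ (η - η') * (x - x') := by
  nlinarith [h x', h' x]

theorem of_prox (hψ : ConvexOn ℝ univ ψ) {ε r p : ℝ} (hε : 0 < ε)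
    (hmin : ∀ s, (r - p) ^ 2 / (2 * ε) + ψ p ≤ (r - s) ^ 2 / (2 * ε) + ψ s) :
    HasSubgradientAt ψ ((r - p) / ε) p := by
  intro u
  set b := ψ u + (r - p) / ε * (p - u)
  set K := (u - p) ^ 2 / (2 * ε)
  have hsmall : ∀ t ∈ Ioc (0 : ℝ) 1, ψ p ≤ b + t * K := by
    rintro t ⟨ht0, ht1⟩
    have hconv : ψ (p + t * (u - p)) ≤ (1 - t) * ψ p + t * ψ u := by
      rw [show p + t * (u - p) = (1 - t) • p + t • u by simp only [smul_eq_mul]; ring]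
      exact hψ.2 (mem_univ p) (mem_univ u) (sub_nonneg.2 ht1) ht0.le (by ring)
    have hexpand : (r - (p + t * (u - p))) ^ 2 / (2 * ε)
        = (r - p) ^ 2 / (2 * ε) + t * ((r - p) / ε * (p - u)) + t * (t * K) := by
      simp only [K]
      field_simp
      ring
    have := hmin (p + t * (u - p))
    exact le_of_mul_le_mul_left (by nlinarith) ht0
  have hlim : Tendsto (fun t => b + t * K) (𝓝[>] 0) (𝓝 b) := by
    have : Tendsto (fun t => b + t * K) (𝓝 0) (𝓝 (b + 0 * K)) :=
      (continuous_const.add (continuous_id.mul continuous_const)).tendsto 0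
    simpa using this.mono_left nhdsWithin_le_nhds
  exact ge_of_tendsto hlim (eventually_of_mem (Ioc_mem_nhdsGT one_pos) hsmall)

theorem abs_le_abs_of_add_mul {β η p ε : ℝ} (hp : HasSubgradientAt ψ β p)
    (hr : HasSubgradientAt ψ η (p + ε * β)) (hε : 0 < ε) : |β| ≤ |η| := by
  have hmono := hp.mul_sub_nonneg hr
  have hβ : β * β ≤ η * β := by nlinarith
  have hsq : |β| * |β| ≤ |η| * |β| := by
    rw [← abs_mul, ← abs_mul, abs_mul_self]
    exact hβ.trans (le_abs_self _)
  nlinarith [abs_nonneg β, abs_nonneg η]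

theorem neg_mul_abs_mul_abs_le {η₁ η₂ p₁ p₂ ε₁ ε₂ : ℝ} (h₁ : HasSubgradientAt ψ η₁ p₁)
    (h₂ : HasSubgradientAt ψ η₂ p₂) (hε₁ : 0 ≤ ε₁) (hε₂ : 0 ≤ ε₂) :
    -((ε₁ + ε₂) * (|η₁| * |η₂|)) ≤ (η₁ - η₂) * (p₁ + ε₁ * η₁ - (p₂ + ε₂ * η₂)) := by
  have hmono := h₁.mul_sub_nonneg h₂
  have hprod : η₁ * η₂ ≤ |η₁| * |η₂| := abs_mul η₁ η₂ ▸ le_abs_self _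
  nlinarith [mul_nonneg hε₁ (sq_nonneg η₁), mul_nonneg hε₂ (sq_nonneg η₂),
    mul_le_mul_of_nonneg_left hprod (add_nonneg hε₁ hε₂)]

end HasSubgradientAt

theorem one_add_abs_mul_one_add_abs_le (x y : ℝ) :
    (|x| + 1) * (|y| + 1) ≤ 2 * (x ^ 2 + y ^ 2 + 1) := by
  nlinarith [sq_abs x, sq_abs y, sq_nonneg (|x| - |y|), sq_nonneg (|x| - 1), sq_nonneg (|y| - 1)]

theorem stmt_15_general (ψ : ℝ → ℝ) (hconv : ConvexOn ℝ Set.univ ψ)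
    (c : ℝ) (hc : 0 < c)
    (hH3 : ∀ r : ℝ, ∃ η : ℝ, (∀ u : ℝ, ψ r ≤ ψ u + η * (r - u)) ∧ |η| ≤ c * (|r| + 1))
    (J : ℝ → ℝ → ℝ)
    (hJ : ∀ ε : ℝ, 0 < ε → ∀ r s : ℝ,
      (r - J ε r) ^ 2 / (2 * ε) + ψ (J ε r) ≤ (r - s) ^ 2 / (2 * ε) + ψ s) :
    ∃ C : ℝ, 0 < C ∧ ∀ r r' ε₁ ε₂ : ℝ, 0 < ε₁ → 0 < ε₂ →
      -C * (ε₁ + ε₂) * (r ^ 2 + r' ^ 2 + 1)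
        ≤ ((r - J ε₁ r) / ε₁ - (r' - J ε₂ r') / ε₂) * (r - r') := by
  have hsub : ∀ ε, 0 < ε → ∀ r, HasSubgradientAt ψ ((r - J ε r) / ε) (J ε r) :=
    fun ε hε r => .of_prox hconv hε (hJ ε hε r)
  have hresolvent : ∀ ε, 0 < ε → ∀ r, J ε r + ε * ((r - J ε r) / ε) = r := by
    intro ε hε r
    rw [mul_div_cancel₀ _ hε.ne', add_sub_cancel]
  have hbound : ∀ ε, 0 < ε → ∀ r, |(r - J ε r) / ε| ≤ c * (|r| + 1) := by
    intro ε hε r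
    obtain ⟨η, hη, hηc⟩ := hH3 r
    rw [← hresolvent ε hε r] at hη
    exact ((hsub ε hε r).abs_le_abs_of_add_mul hη hε).trans hηc
  refine ⟨2 * c ^ 2, by positivity, fun r r' ε₁ ε₂ hε₁ hε₂ => ?_⟩
  have hcross := (hsub ε₁ hε₁ r).neg_mul_abs_mul_abs_le (hsub ε₂ hε₂ r') hε₁.le hε₂.le
  rw [hresolvent ε₁ hε₁, hresolvent ε₂ hε₂] at hcross
  calc -(2 * c ^ 2) * (ε₁ + ε₂) * (r ^ 2 + r' ^ 2 + 1)
      = -((ε₁ + ε₂) * (c ^ 2 * (2 * (r ^ 2 + r' ^ 2 + 1)))) := by ring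
    _ ≤ -((ε₁ + ε₂) * (c ^ 2 * ((|r| + 1) * (|r'| + 1)))) := by
        gcongr -(_ * (_ * ?_))
        exact one_add_abs_mul_one_add_abs_le r r'
    _ = -((ε₁ + ε₂) * (c * (|r| + 1) * (c * (|r'| + 1)))) := by ring
    _ ≤ -((ε₁ + ε₂) * (|(r - J ε₁ r) / ε₁| * |(r' - J ε₂ r') / ε₂|)) := by
        gcongr
        · exact hbound ε₁ hε₁ r
        · exact hbound ε₂ hε₂ r'
    _ ≤ _ := hcross

/-- Under the linear-growth assumption (H3) on the subdifferential of `ψ`, the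
cross-monotonicity estimate for Yosida approximations holds with a quadratic
lower bound. -/
theorem stmt_15 (ψ : ℝ → ℝ) (hconv : ConvexOn ℝ Set.univ ψ)
    (hnonneg : ∀ r : ℝ, 0 ≤ ψ r) (hzero : ψ 0 = 0)
    (c : ℝ) (hc : 0 < c)
    (hH3 : ∀ r : ℝ, ∃ η : ℝ, (∀ u : ℝ, ψ r ≤ ψ u + η * (r - u)) ∧ |η| ≤ c * (|r| + 1))
    (J : ℝ → ℝ → ℝ)
    (hJ : ∀ ε : ℝ, 0 < ε → ∀ r s : ℝ,
      (r - J ε r) ^ 2 / (2 * ε) + ψ (J ε r) ≤ (r - s) ^ 2 / (2 * ε) + ψ s) :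
    ∃ C : ℝ, 0 < C ∧ ∀ r r' ε₁ ε₂ : ℝ, 0 < ε₁ → 0 < ε₂ →
      -C * (ε₁ + ε₂) * (r ^ 2 + r' ^ 2 + 1)
        ≤ ((r - J ε₁ r) / ε₁ - (r' - J ε₂ r') / ε₂) * (r - r') :=
  stmt_15_general ψ hconv c hc hH3 J hJ
end

section
/- Let (E,𝓑,μ) be a measure space with μ finite, let ψ : ℝ → [0,∞) be convex with ψ(0)=0, and suppose (H3) holds: there exists c > 0 such that for every r ∈ ℝ there is a subgradient η of ψ at r with |η| ≤ c·(|r| + 1). For ε > 0 let ψ^ε(r) := inf_{s∈ℝ} ((r−s)²/(2ε) + ψ(s)) be the Moreau regularization. Then for every v ∈ L²(μ): 0 ≤ ∫_E (ψ(v) − ψ^ε(v)) dμ ≤ 2c²·ε·(‖v‖²_{L²(μ)} + μ(E)). -/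
open MeasureTheory ENNReal

/- A subgradient `η` of `ψ` at `r` bounds the Moreau gap pointwise: completing the square,
`(r - s)² / (2ε) + ψ s ≥ ψ r - ε η² / 2` for every `s`, so `ψ r - ψ^ε r ≤ ε η² / 2`. Under (H3) this
is at most a multiple of `ε (r² + 1)`, which integrates to the claimed bound for `v ∈ L²`. -/

noncomputable def moreauEnvelope (ψ : ℝ → ℝ) (ε r : ℝ) : ℝ :=
  ⨅ s : ℝ, ((r - s) ^ 2 / (2 * ε) + ψ s)

theorem sub_moreauEnvelope_le_of_subgradient {ψ : ℝ → ℝ} {ε r η : ℝ} (hε : 0 < ε)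
    (hη : ∀ u : ℝ, ψ r ≤ ψ u + η * (r - u)) :
    ψ r - moreauEnvelope ψ ε r ≤ ε * η ^ 2 / 2 := by
  suffices ψ r - ε * η ^ 2 / 2 ≤ moreauEnvelope ψ ε r by linarith
  refine le_ciInf fun s => ?_
  have hsquare : (r - s - ε * η) ^ 2 / (2 * ε)
      = (r - s) ^ 2 / (2 * ε) - η * (r - s) + ε * η ^ 2 / 2 := by
    field_simp
    ring
  have hnonneg : 0 ≤ (r - s - ε * η) ^ 2 / (2 * ε) := by positivity
  linarith [hη s]

theorem sq_le_of_abs_le_mul_abs_add_one {η c r : ℝ} (h : |η| ≤ c * (|r| + 1)) :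
    η ^ 2 ≤ 2 * c ^ 2 * (r ^ 2 + 1) := by
  calc η ^ 2 = |η| ^ 2 := (sq_abs η).symm
    _ ≤ (c * (|r| + 1)) ^ 2 := pow_le_pow_left₀ (abs_nonneg η) h 2
    _ ≤ 2 * c ^ 2 * (r ^ 2 + 1) := by
      nlinarith [sq_nonneg (|r| - 1), sq_abs r, sq_nonneg c]

theorem sub_moreauEnvelope_le_of_subgradient_growth {ψ : ℝ → ℝ} {c ε : ℝ} (hε : 0 < ε)
    (hH3 : ∀ r : ℝ, ∃ η : ℝ, (∀ u : ℝ, ψ r ≤ ψ u + η * (r - u)) ∧ |η| ≤ c * (|r| + 1))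
    (r : ℝ) : ψ r - moreauEnvelope ψ ε r ≤ 2 * c ^ 2 * ε * (r ^ 2 + 1) := by
  obtain ⟨η, hη, hηc⟩ := hH3 r
  have hsq := sq_le_of_abs_le_mul_abs_add_one hηc
  calc ψ r - moreauEnvelope ψ ε r ≤ ε * η ^ 2 / 2 := sub_moreauEnvelope_le_of_subgradient hε hη
    _ ≤ 2 * c ^ 2 * ε * (r ^ 2 + 1) := by nlinarith [sq_nonneg c, sq_nonneg r]

theorem lintegral_ofReal_le_ofReal_integral {α : Type*} [MeasurableSpace α] {μ : Measure α}
    {f g : α → ℝ} (hfg : ∀ x, f x ≤ g x) (hg : Integrable g μ) (hg_nonneg : ∀ x, 0 ≤ g x) :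
    ∫⁻ x, ENNReal.ofReal (f x) ∂μ ≤ ENNReal.ofReal (∫ x, g x ∂μ) := by
  rw [ofReal_integral_eq_lintegral_ofReal hg (Filter.Eventually.of_forall hg_nonneg)]
  exact lintegral_mono fun x => ENNReal.ofReal_le_ofReal (hfg x)

theorem integral_const_mul_sq_add_one {α : Type*} [MeasurableSpace α] {μ : Measure α}
    [IsFiniteMeasure μ] {v : α → ℝ} (hv : MemLp v 2 μ) (a : ℝ) :
    ∫ x, a * (v x ^ 2 + 1) ∂μ = a * ((∫ x, v x ^ 2 ∂μ) + (μ Set.univ).toReal) := by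
  rw [integral_const_mul, integral_add hv.integrable_sq (integrable_const 1), integral_const]
  simp [Measure.real]

theorem stmt_16_general {E : Type*} [MeasurableSpace E] (μ : Measure E) [IsFiniteMeasure μ]
    (ψ : ℝ → ℝ)
    (c : ℝ)
    (hH3 : ∀ r : ℝ, ∃ η : ℝ, (∀ u : ℝ, ψ r ≤ ψ u + η * (r - u)) ∧ |η| ≤ c * (|r| + 1))
    (ε : ℝ) (hε : 0 < ε)
    (v : E → ℝ) (hv : MemLp v 2 μ) :
    (0 : ℝ≥0∞) ≤ ∫⁻ x, ENNReal.ofReal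
        (ψ (v x) - ⨅ s : ℝ, ((v x - s) ^ 2 / (2 * ε) + ψ s)) ∂μ ∧
    ∫⁻ x, ENNReal.ofReal
        (ψ (v x) - ⨅ s : ℝ, ((v x - s) ^ 2 / (2 * ε) + ψ s)) ∂μ
      ≤ ENNReal.ofReal (2 * c ^ 2 * ε * ((∫ x, (v x) ^ 2 ∂μ) + (μ Set.univ).toReal)) := by
  refine ⟨zero_le, ?_⟩
  rw [← integral_const_mul_sq_add_one hv]
  exact lintegral_ofReal_le_ofReal_integral
    (fun x => sub_moreauEnvelope_le_of_subgradient_growth hε hH3 (v x))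
    ((hv.integrable_sq.add (integrable_const 1)).const_mul _)
    (fun x => by positivity)

/-- For `v ∈ L²(μ)`, `0 ≤ ∫ (ψ(v) − ψ^ε(v)) dμ ≤ 2c²·ε·(‖v‖²_{L²} + μ(E))`, where
`ψ^ε` is the Moreau regularization of `ψ`. -/
theorem stmt_16 {E : Type*} [MeasurableSpace E] (μ : Measure E) [IsFiniteMeasure μ]
    (ψ : ℝ → ℝ) (hconv : ConvexOn ℝ Set.univ ψ)
    (hnonneg : ∀ r : ℝ, 0 ≤ ψ r) (hzero : ψ 0 = 0)
    (c : ℝ) (hc : 0 < c)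
    (hH3 : ∀ r : ℝ, ∃ η : ℝ, (∀ u : ℝ, ψ r ≤ ψ u + η * (r - u)) ∧ |η| ≤ c * (|r| + 1))
    (ε : ℝ) (hε : 0 < ε)
    (v : E → ℝ) (hv : MemLp v 2 μ) :
    (0 : ℝ≥0∞) ≤ ∫⁻ x, ENNReal.ofReal
        (ψ (v x) - ⨅ s : ℝ, ((v x - s) ^ 2 / (2 * ε) + ψ s)) ∂μ ∧
    ∫⁻ x, ENNReal.ofReal
        (ψ (v x) - ⨅ s : ℝ, ((v x - s) ^ 2 / (2 * ε) + ψ s)) ∂μ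
      ≤ ENNReal.ofReal (2 * c ^ 2 * ε * ((∫ x, (v x) ^ 2 ∂μ) + (μ Set.univ).toReal)) :=
  stmt_16_general μ ψ c hH3 ε hε v hv
end
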